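/- arXiv:2208.14512 — 3 statements merged into one kernel-verified Lean document; each statement's English description precedes it below -/
import Mathlib

section
/- Let 1 < p₀ < p < p₀/(p₀−1), set r = p₀'/p = p₀/(p(p₀−1)) and s = p/p₀. Let u and ν be weights on ∂𝔻 such that u ∈ A_s(∂𝔻) ∩ RH_{r'}(∂𝔻) and ν^r ∈ A₂(∂𝔻). Then uν ∈ A_p(∂𝔻) and [uν]_{A_p} ≤ [u]_{A_s} · [u]_{RH_{r'}} · [ν^r]_{A₂}^{1/r}. -/
noncomputable section

open MeasureTheory Filter Set
open scoped ENNReal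

/-- Normalized arc length measure `dθ̃ = dθ/(2π)` on the unit circle, as a measure on `ℂ`. -/
def circleMeasure : Measure ℂ :=
  ENNReal.ofReal (2 * Real.pi)⁻¹ •
    ((volume.restrict (Set.Ioc (0 : ℝ) (2 * Real.pi))).map (circleMap 0 1))

/-- The open arc of the unit circle centered at `e^{ia}` of (half-)length `r`. -/
def arcSet (a r : ℝ) : Set ℂ := circleMap 0 1 '' Set.Ioo (a - r) (a + r)

/-- Average of a nonnegative quantity over a set, in `ℝ≥0∞`. -/
def eAvg (μ : Measure ℂ) (I : Set ℂ) (w : ℂ → ℝ) : ℝ≥0∞ :=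
  (∫⁻ z in I, ENNReal.ofReal (w z) ∂μ) / μ I

/-- The Muckenhoupt `A_p` characteristic of a weight on the unit circle. -/
def ApCircle (p : ℝ) (w : ℂ → ℝ) : ℝ≥0∞ :=
  ⨆ (a : ℝ) (r : ℝ) (_ : 0 < r ∧ r ≤ Real.pi),
    eAvg circleMeasure (arcSet a r) w *
      (eAvg circleMeasure (arcSet a r) fun z => w z ^ (-1 / (p - 1))) ^ (p - 1)

/-- The reverse Hölder `RH_q` characteristic of a weight on the unit circle. -/
def RHCircle (q : ℝ) (w : ℂ → ℝ) : ℝ≥0∞ :=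
  ⨆ (a : ℝ) (r : ℝ) (_ : 0 < r ∧ r ≤ Real.pi),
    (eAvg circleMeasure (arcSet a r) fun z => w z ^ q) ^ (1 / q) /
      eAvg circleMeasure (arcSet a r) w

/-- A weight: measurable and positive almost everywhere. -/
def IsWeightOn (μ : Measure ℂ) (w : ℂ → ℝ) : Prop :=
  Measurable w ∧ ∀ᵐ z ∂μ, 0 < w z

/-!
On each arc, Hölder's inequality with the conjugate exponents `r'`, `r` gives
`⟨uν⟩ ≤ ⟨u^{r'}⟩^{1/r'} ⟨ν^r⟩^{1/r}`, and, since `p - 1 = (s - 1) + 1/r`, the generalized Hölder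
inequality applied to `u⁻¹` and `ν⁻¹` gives
`⟨(uν)^{-1/(p-1)}⟩^{p-1} ≤ ⟨u^{-1/(s-1)}⟩^{s-1} ⟨ν^{-r}⟩^{1/r}`. Multiplying the two bounds and
inserting `⟨u⟩ ⟨u⟩⁻¹` regroups the right-hand side into the `A_s` and `RH_{r'}` quantities of `u`
on the arc times the `1/r`-th power of the `A_2` quantity of `ν^r`. Finiteness of `[u]_{A_s}` is
what keeps `⟨u⟩` finite, so that the insertion is legitimate.
-/

def apOn (μ : Measure ℂ) (I : Set ℂ) (p : ℝ) (w : ℂ → ℝ) : ℝ≥0∞ :=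
  eAvg μ I w * (eAvg μ I fun z => w z ^ (-1 / (p - 1))) ^ (p - 1)

def rhOn (μ : Measure ℂ) (I : Set ℂ) (q : ℝ) (w : ℂ → ℝ) : ℝ≥0∞ :=
  (eAvg μ I fun z => w z ^ q) ^ (1 / q) / eAvg μ I w

theorem apOn_le_ApCircle {p : ℝ} (w : ℂ → ℝ) (a : ℝ) {r : ℝ} (hr : 0 < r ∧ r ≤ Real.pi) :
    apOn circleMeasure (arcSet a r) p w ≤ ApCircle p w :=
  le_iSup_of_le a (le_iSup₂_of_le r hr le_rfl)

theorem rhOn_le_RHCircle {q : ℝ} (w : ℂ → ℝ) (a : ℝ) {r : ℝ} (hr : 0 < r ∧ r ≤ Real.pi) :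
    rhOn circleMeasure (arcSet a r) q w ≤ RHCircle q w :=
  le_iSup_of_le a (le_iSup₂_of_le r hr le_rfl)

instance isFiniteMeasure_circleMeasure : IsFiniteMeasure circleMeasure where
  measure_univ_lt_top := by
    rw [circleMeasure, Measure.smul_apply,
      Measure.map_apply (continuous_circleMap 0 1).measurable MeasurableSet.univ]
    simp [ENNReal.mul_lt_top]

section Averages

variable {μ : Measure ℂ} {I : Set ℂ}

theorem eAvg_eq_lintegral (f : ℂ → ℝ) :
    eAvg μ I f = ∫⁻ z, ENNReal.ofReal (f z) ∂((μ I)⁻¹ • μ.restrict I) := by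
  rw [eAvg, lintegral_smul_measure, smul_eq_mul, ENNReal.div_eq_inv_mul]

theorem eAvg_congr_ae {f g : ℂ → ℝ} (h : ∀ᵐ z ∂μ, f z = g z) : eAvg μ I f = eAvg μ I g := by
  rw [eAvg, eAvg, lintegral_congr_ae (ae_restrict_of_ae (h.mono fun z hz => by rw [hz]))]

theorem eAvg_of_measure_eq_zero (hI : μ I = 0) (f : ℂ → ℝ) : eAvg μ I f = 0 := by
  rw [eAvg, Measure.restrict_eq_zero.mpr hI, lintegral_zero_measure, ENNReal.zero_div]

theorem eAvg_ne_zero [IsFiniteMeasure μ] (hI : μ I ≠ 0) {f : ℂ → ℝ} (hf : AEMeasurable f μ)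
    (hf0 : ∀ᵐ z ∂μ, 0 < f z) : eAvg μ I f ≠ 0 := by
  refine ENNReal.div_ne_zero.2 ⟨fun h => hI ?_, measure_ne_top μ I⟩
  rw [lintegral_eq_zero_iff' hf.restrict.ennreal_ofReal] at h
  have hfalse : ∀ᵐ z ∂μ.restrict I, False := by
    filter_upwards [ae_restrict_of_ae hf0, h] with z hpos hzero
    exact (ENNReal.ofReal_eq_zero.1 hzero).not_gt hpos
  exact Measure.restrict_eq_zero.1 (ae_eq_bot.1 (eventually_false_iff_eq_bot.1 hfalse))

theorem eAvg_rpow_eq_lintegral {f : ℂ → ℝ} (hf0 : ∀ᵐ z ∂μ, 0 ≤ f z) {p : ℝ} (hp : 0 ≤ p) :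
    eAvg μ I (fun z => f z ^ p) =
      ∫⁻ z, ENNReal.ofReal (f z) ^ p ∂((μ I)⁻¹ • μ.restrict I) := by
  rw [eAvg_eq_lintegral]
  refine lintegral_congr_ae (Measure.ae_smul_measure (ae_restrict_of_ae ?_) _)
  filter_upwards [hf0] with z hz
  exact (ENNReal.ofReal_rpow_of_nonneg hz hp).symm

theorem eAvg_mul_rpow_le {f g : ℂ → ℝ} (hf : AEMeasurable f μ) (hg : AEMeasurable g μ)
    (hf0 : ∀ᵐ z ∂μ, 0 ≤ f z) (hg0 : ∀ᵐ z ∂μ, 0 ≤ g z) {p q r : ℝ} (hp : 0 < p) (hpq : p < q)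
    (hpqr : 1 / p = 1 / q + 1 / r) :
    (eAvg μ I fun z => (f z * g z) ^ p) ^ (1 / p) ≤
      (eAvg μ I fun z => f z ^ q) ^ (1 / q) * (eAvg μ I fun z => g z ^ r) ^ (1 / r) := by
  have hr : 0 < r := by
    have : 1 / q < 1 / p := one_div_lt_one_div_of_lt hp hpq
    exact one_div_pos.1 (by linarith)
  have hfg0 : ∀ᵐ z ∂μ, 0 ≤ f z * g z := by
    filter_upwards [hf0, hg0] with z hf hg
    exact mul_nonneg hf hg
  rw [eAvg_rpow_eq_lintegral hfg0 hp.le, eAvg_rpow_eq_lintegral hf0 (hp.trans hpq).le,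
    eAvg_rpow_eq_lintegral hg0 hr.le]
  have hmul : ∀ᵐ z ∂((μ I)⁻¹ • μ.restrict I), ENNReal.ofReal (f z * g z) ^ p =
      ((fun z => ENNReal.ofReal (f z)) * fun z => ENNReal.ofReal (g z)) z ^ p := by
    refine Measure.ae_smul_measure (ae_restrict_of_ae ?_) _
    filter_upwards [hf0] with z hz
    rw [Pi.mul_apply, ENNReal.ofReal_mul hz]
  rw [lintegral_congr_ae hmul]
  exact ENNReal.lintegral_Lp_mul_le_Lq_mul_Lr hp hpq hpqr _
    ((hf.restrict.smul_measure _).ennreal_ofReal) ((hg.restrict.smul_measure _).ennreal_ofReal)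

theorem eAvg_mul_le {f g : ℂ → ℝ} (hf : AEMeasurable f μ) (hg : AEMeasurable g μ)
    (hf0 : ∀ᵐ z ∂μ, 0 ≤ f z) (hg0 : ∀ᵐ z ∂μ, 0 ≤ g z) {q r : ℝ} (hqr : q.HolderConjugate r) :
    eAvg μ I (fun z => f z * g z) ≤
      (eAvg μ I fun z => f z ^ q) ^ (1 / q) * (eAvg μ I fun z => g z ^ r) ^ (1 / r) := by
  have h := eAvg_mul_rpow_le (I := I) (q := q) (r := r) hf hg hf0 hg0 one_pos hqr.lt
    (by rw [div_one, one_div, one_div, hqr.inv_add_inv_eq_one])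
  simpa only [Real.rpow_one, div_one, ENNReal.rpow_one] using h

theorem eAvg_mul_rpow_neg_le {f g : ℂ → ℝ} (hf : AEMeasurable f μ) (hg : AEMeasurable g μ)
    (hf0 : ∀ᵐ z ∂μ, 0 ≤ f z) (hg0 : ∀ᵐ z ∂μ, 0 ≤ g z) {a b : ℝ} (ha : 0 < a) (hb : 0 < b) :
    (eAvg μ I fun z => (f z * g z) ^ (-1 / (a + b))) ^ (a + b) ≤
      (eAvg μ I fun z => f z ^ (-1 / a)) ^ a * (eAvg μ I fun z => g z ^ (-1 / b)) ^ b := by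
  have hinv : ∀ {h : ℂ → ℝ}, (∀ᵐ z ∂μ, 0 ≤ h z) → ∀ c : ℝ,
      eAvg μ I (fun z => (h z)⁻¹ ^ (1 / c)) = eAvg μ I fun z => h z ^ (-1 / c) :=
    fun h0 c => eAvg_congr_ae (h0.mono fun z hz => by
      rw [Real.inv_rpow hz, neg_div, Real.rpow_neg hz])
  have hfg0 : ∀ᵐ z ∂μ, 0 ≤ f z * g z := by
    filter_upwards [hf0, hg0] with z hf hg
    exact mul_nonneg hf hg
  have h := eAvg_mul_rpow_le (I := I) (f := fun z => (f z)⁻¹) (g := fun z => (g z)⁻¹)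
    (p := 1 / (a + b)) (q := 1 / a) (r := 1 / b) hf.inv hg.inv
    (hf0.mono fun z hz => inv_nonneg.2 hz) (hg0.mono fun z hz => inv_nonneg.2 hz) (by positivity)
    (one_div_lt_one_div_of_lt ha (by linarith)) (by simp only [one_div_one_div])
  simp only [← mul_inv, one_div_one_div] at h
  rwa [hinv hfg0, hinv hf0, hinv hg0] at h

theorem apOn_mul_le {u ν : ℂ → ℝ} (hu : AEMeasurable u μ) (hν : AEMeasurable ν μ)
    (hu0 : ∀ᵐ z ∂μ, 0 ≤ u z) (hν0 : ∀ᵐ z ∂μ, 0 ≤ ν z) {p s q r : ℝ} (hs : 1 < s)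
    (hqr : q.HolderConjugate r) (hp : p - 1 = (s - 1) + 1 / r)
    (hA0 : eAvg μ I u ≠ 0) (hAT : eAvg μ I u ≠ ⊤) :
    apOn μ I p (fun z => u z * ν z) ≤
      apOn μ I s u * rhOn μ I q u * apOn μ I 2 (fun z => ν z ^ r) ^ (1 / r) := by
  set A := eAvg μ I u
  set R := eAvg μ I fun z => u z ^ q
  set X := eAvg μ I fun z => u z ^ (-1 / (s - 1))
  set B := eAvg μ I fun z => ν z ^ r
  set Y := eAvg μ I fun z => ν z ^ (-1 / (1 / r))
  have hr : 0 < r := hqr.symm.pos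
  have hA2 : apOn μ I 2 (fun z => ν z ^ r) = B * Y := by
    rw [apOn, show (2 : ℝ) - 1 = 1 by norm_num, ENNReal.rpow_one]
    congr 1
    refine eAvg_congr_ae (hν0.mono fun z hz => ?_)
    rw [← Real.rpow_mul hz]
    congr 1
    field_simp
  have holder : eAvg μ I (fun z => u z * ν z) ≤ R ^ (1 / q) * B ^ (1 / r) :=
    eAvg_mul_le hu hν hu0 hν0 hqr
  have holderNeg :
      (eAvg μ I fun z => (u z * ν z) ^ (-1 / (p - 1))) ^ (p - 1) ≤ X ^ (s - 1) * Y ^ (1 / r) := by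
    rw [hp]
    exact eAvg_mul_rpow_neg_le hu hν hu0 hν0 (sub_pos.2 hs) (one_div_pos.2 hr)
  calc apOn μ I p (fun z => u z * ν z)
      ≤ R ^ (1 / q) * B ^ (1 / r) * (X ^ (s - 1) * Y ^ (1 / r)) := mul_le_mul' holder holderNeg
    _ = A * A⁻¹ * (R ^ (1 / q) * B ^ (1 / r) * (X ^ (s - 1) * Y ^ (1 / r))) := by
        rw [ENNReal.mul_inv_cancel hA0 hAT, one_mul]
    _ = A * X ^ (s - 1) * (R ^ (1 / q) / A) * (B * Y) ^ (1 / r) := by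
        rw [div_eq_mul_inv (R ^ (1 / q)) A, ENNReal.mul_rpow_of_nonneg _ _ (one_div_pos.2 hr).le]
        ring
    _ = apOn μ I s u * rhOn μ I q u * apOn μ I 2 (fun z => ν z ^ r) ^ (1 / r) := by
        rw [hA2]
        rfl

theorem eAvg_ne_top_of_apOn_ne_top [IsFiniteMeasure μ] (hI : μ I ≠ 0) {w : ℂ → ℝ}
    (hw : IsWeightOn μ w) {p : ℝ} (hp : 1 < p) (h : apOn μ I p w ≠ ⊤) : eAvg μ I w ≠ ⊤ := by
  have hX : (eAvg μ I fun z => w z ^ (-1 / (p - 1))) ≠ 0 :=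
    eAvg_ne_zero hI (hw.1.pow_const _).aemeasurable
      (hw.2.mono fun z hz => Real.rpow_pos_of_pos hz _)
  have hXp : (eAvg μ I fun z => w z ^ (-1 / (p - 1))) ^ (p - 1) ≠ 0 := by
    rw [Ne, ENNReal.rpow_eq_zero_iff]
    rintro (⟨h0, -⟩ | ⟨-, hneg⟩)
    exacts [hX h0, by linarith]
  intro hA
  exact h (by rw [apOn, hA, ENNReal.top_mul hXp])

end Averages

theorem ApCircle_mul_le {u ν : ℂ → ℝ} (hu : IsWeightOn circleMeasure u) (hν : Measurable ν)
    (hν0 : ∀ᵐ z ∂circleMeasure, 0 ≤ ν z) {p s q r : ℝ} (hs : 1 < s) (hqr : q.HolderConjugate r)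
    (hp : p - 1 = (s - 1) + 1 / r) (huAs : ApCircle s u ≠ ⊤) :
    ApCircle p (fun z => u z * ν z) ≤
      ApCircle s u * RHCircle q u * ApCircle 2 (fun z => ν z ^ r) ^ (1 / r) := by
  refine iSup_le fun a => iSup₂_le fun c hc => ?_
  by_cases hI : circleMeasure (arcSet a c) = 0
  · rw [eAvg_of_measure_eq_zero hI, zero_mul]
    exact zero_le
  have hAs := (apOn_le_ApCircle (p := s) u a hc).trans_lt huAs.lt_top
  calc apOn circleMeasure (arcSet a c) p (fun z => u z * ν z)
      ≤ _ := apOn_mul_le hu.1.aemeasurable hν.aemeasurable (hu.2.mono fun _ h => h.le) hν0 hs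
          hqr hp (eAvg_ne_zero hI hu.1.aemeasurable hu.2)
          (eAvg_ne_top_of_apOn_ne_top hI hu hs hAs.ne)
    _ ≤ _ := by
        gcongr
        · exact apOn_le_ApCircle u a hc
        · exact rhOn_le_RHCircle u a hc
        · exact one_div_nonneg.2 hqr.symm.nonneg
        · exact apOn_le_ApCircle _ a hc

/-- Let `1 < p₀ < p < p₀/(p₀-1)`, `r = p₀/(p(p₀-1))`, `s = p/p₀`.
If `u ∈ A_s(∂𝔻) ∩ RH_{r'}(∂𝔻)` and `ν^r ∈ A₂(∂𝔻)`, then `uν ∈ A_p(∂𝔻)` and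
`[uν]_{A_p} ≤ [u]_{A_s} · [u]_{RH_{r'}} · [ν^r]_{A₂}^{1/r}`. -/
theorem product_weight_Ap_circle
    (p₀ p : ℝ) (h₀ : 1 < p₀) (h₀p : p₀ < p) (hp : p < p₀ / (p₀ - 1))
    (u ν : ℂ → ℝ)
    (hu : IsWeightOn circleMeasure u) (hν : IsWeightOn circleMeasure ν)
    (huAs : ApCircle (p / p₀) u < ⊤)
    (huRH : RHCircle ((p₀ / (p * (p₀ - 1))) / (p₀ / (p * (p₀ - 1)) - 1)) u < ⊤)
    (hνA2 : ApCircle 2 (fun z => ν z ^ (p₀ / (p * (p₀ - 1)))) < ⊤) :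
    ApCircle p (fun z => u z * ν z) < ⊤ ∧
      ApCircle p (fun z => u z * ν z) ≤
        ApCircle (p / p₀) u *
          RHCircle ((p₀ / (p * (p₀ - 1))) / (p₀ / (p * (p₀ - 1)) - 1)) u *
          (ApCircle 2 (fun z => ν z ^ (p₀ / (p * (p₀ - 1))))) ^
            (1 / (p₀ / (p * (p₀ - 1)))) := by
  have hp₀ : 0 < p₀ - 1 := by linarith
  have hs : 1 < p / p₀ := (one_lt_div (by linarith)).2 h₀p
  have hr : 1 < p₀ / (p * (p₀ - 1)) :=
    (one_lt_div (mul_pos (by linarith) hp₀)).2 ((lt_div_iff₀ hp₀).1 hp)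
  have hpsr : p - 1 = (p / p₀ - 1) + 1 / (p₀ / (p * (p₀ - 1))) := by
    field_simp
    ring
  have hbound := ApCircle_mul_le hu hν.1 (hν.2.mono fun _ h => h.le) hs
    (Real.HolderConjugate.conjExponent hr).symm hpsr huAs.ne
  refine ⟨hbound.trans_lt ?_, hbound⟩
  exact ENNReal.mul_lt_top (ENNReal.mul_lt_top huAs huRH)
    (ENNReal.rpow_lt_top_of_nonneg (one_div_pos.2 (by linarith)).le hνA2.ne)
end
end

section
/- For 6/5 < p < 6, the weight w(x) = |x|^{(2−p)/4} on ℝ belongs to A_p(ℝ), and its characteristic satisfies [w]_{A_p(ℝ)} ≈ (1/(6−p))·(4(p−1)/(5p−6))^{p−1}, with implicit constants independent of p. -/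
/-!
Write `α = (2 - p)/4` for the exponent of `w` and `β = (p - 2)/(4(p - 1))` for that of the
dual weight `w^{-1/(p-1)}`; then `α + β (p - 1) = 0`, and `-1 < α, β ≤ 1` exactly when
`6/5 < p < 6`. On an interval of length `L` lying in `(-2L, 2L)`, the average of `|x|^γ` is at
most `2^{γ+2} L^γ / (γ + 1)`; on any other interval `|x|` varies by at most a factor `2`, so the
average is at most `2^{|γ|}` times a value of `|x|^γ`. In both cases the powers of `L` (or of
`|x|`) cancel in the `A_p` product because `α + β (p - 1) = 0`, which leaves
`≲ 1/((α + 1)(β + 1)^{p-1})`. This constant is `4/(6 - p) · (4(p - 1)/(5p - 6))^{p-1}`, and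
the interval `(0, 1)` attains it.
-/

noncomputable section

open MeasureTheory Set
open scoped ENNReal

/-- Average of a nonnegative quantity over a set of reals, in `ℝ≥0∞`. -/
def eAvgR (I : Set ℝ) (w : ℝ → ℝ) : ℝ≥0∞ :=
  (∫⁻ x in I, ENNReal.ofReal (w x)) / volume I

/-- The Muckenhoupt `A_p(ℝ)` characteristic: the supremum over bounded intervals of
`(⨍_I w)(⨍_I w^{-1/(p-1)})^{p-1}`. -/
def ApR (p : ℝ) (w : ℝ → ℝ) : ℝ≥0∞ :=
  ⨆ (a : ℝ) (b : ℝ) (_ : a < b),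
    eAvgR (Set.Ioo a b) w * (eAvgR (Set.Ioo a b) fun x => w x ^ (-1 / (p - 1))) ^ (p - 1)

lemma lintegral_abs_rpow_Ioo_of_nonneg {γ a b : ℝ} (hγ : -1 < γ) (ha : 0 ≤ a)
    (hab : a ≤ b) :
    ∫⁻ x in Ioo a b, ENNReal.ofReal (|x| ^ γ) =
      ENNReal.ofReal ((b ^ (γ + 1) - a ^ (γ + 1)) / (γ + 1)) := by
  have hpos : ∀ x ∈ Ioo a b, 0 < x := fun x hx => ha.trans_lt hx.1
  have hint : IntegrableOn (fun x : ℝ => x ^ γ) (Ioo a b) :=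
    (intervalIntegral.intervalIntegrable_rpow' hγ).1.mono_set Ioo_subset_Ioc_self
  rw [setLIntegral_congr_fun measurableSet_Ioo fun x hx => by rw [abs_of_pos (hpos x hx)],
    ← ofReal_integral_eq_lintegral_ofReal hint
      ((ae_restrict_mem measurableSet_Ioo).mono fun x hx =>
        (Real.rpow_pos_of_pos (hpos x hx) γ).le),
    ← integral_Ioc_eq_integral_Ioo, ← intervalIntegral.integral_of_le hab,
    integral_rpow (Or.inl hγ)]

lemma lintegral_abs_rpow_Ioo_neg_self {γ c : ℝ} (hγ : -1 < γ) (hc : 0 < c) :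
    ∫⁻ x in Ioo (-c) c, ENNReal.ofReal (|x| ^ γ) =
      ENNReal.ofReal (2 * (c ^ (γ + 1) / (γ + 1))) := by
  have hγ1 : 0 < γ + 1 := by linarith
  have hright : ∫⁻ x in Ioo 0 c, ENNReal.ofReal (|x| ^ γ) =
      ENNReal.ofReal (c ^ (γ + 1) / (γ + 1)) := by
    rw [lintegral_abs_rpow_Ioo_of_nonneg hγ le_rfl hc.le, Real.zero_rpow hγ1.ne', sub_zero]
  have hleft : ∫⁻ x in Ioo (-c) 0, ENNReal.ofReal (|x| ^ γ) =
      ∫⁻ x in Ioo 0 c, ENNReal.ofReal (|x| ^ γ) := by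
    simpa [abs_neg] using
      (Measure.measurePreserving_neg volume).setLIntegral_comp_preimage_emb measurableEmbedding_neg
        (fun x => ENNReal.ofReal (|x| ^ γ)) (Ioo 0 c)
  rw [← Ioo_union_Ico_eq_Ioo (neg_neg_iff_pos.2 hc) hc.le, lintegral_union measurableSet_Ico
      ((Iio_disjoint_Ici le_rfl).mono Ioo_subset_Iio_self Ico_subset_Ici_self),
    setLIntegral_congr Ioo_ae_eq_Ico.symm, hleft, hright,
    ← ENNReal.ofReal_add (by positivity) (by positivity), two_mul]

lemma eAvgR_le_ofReal_of_forall_le {w : ℝ → ℝ} {a b M : ℝ} (hab : a < b)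
    (h : ∀ x ∈ Ioo a b, w x ≤ M) : eAvgR (Ioo a b) w ≤ ENNReal.ofReal M := by
  have hvol : volume (Ioo a b) ≠ 0 := by simpa using hab
  rw [eAvgR, ENNReal.div_le_iff hvol measure_Ioo_lt_top.ne]
  calc ∫⁻ x in Ioo a b, ENNReal.ofReal (w x)
      ≤ ∫⁻ _ in Ioo a b, ENNReal.ofReal M :=
        setLIntegral_mono measurable_const fun x hx => ENNReal.ofReal_le_ofReal (h x hx)
    _ = ENNReal.ofReal M * volume (Ioo a b) := setLIntegral_const _ _

lemma eAvgR_abs_rpow_Ioo_zero_one {γ : ℝ} (hγ : -1 < γ) :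
    eAvgR (Ioo 0 1) (|·| ^ γ) = ENNReal.ofReal (1 / (γ + 1)) := by
  rw [eAvgR, lintegral_abs_rpow_Ioo_of_nonneg hγ le_rfl zero_le_one, Real.volume_Ioo,
    Real.one_rpow, Real.zero_rpow (by linarith)]
  norm_num

lemma eAvgR_abs_rpow_Ioo_le_of_near {γ a b : ℝ} (hγ : -1 < γ) (hab : a < b) (ha : a < 2 * b)
    (hb : 2 * a < b) :
    eAvgR (Ioo a b) (|·| ^ γ) ≤ ENNReal.ofReal (2 ^ (γ + 2) / (γ + 1) * (b - a) ^ γ) := by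
  have hL : 0 < b - a := sub_pos.2 hab
  calc eAvgR (Ioo a b) (|·| ^ γ)
      ≤ (∫⁻ x in Ioo (-(2 * (b - a))) (2 * (b - a)), ENNReal.ofReal (|x| ^ γ)) /
          ENNReal.ofReal (b - a) := by
        rw [eAvgR, Real.volume_Ioo]
        gcongr ?_ / _
        exact lintegral_mono_set (Ioo_subset_Ioo (by linarith) (by linarith))
    _ = ENNReal.ofReal (2 * ((2 * (b - a)) ^ (γ + 1) / (γ + 1)) / (b - a)) := by
        rw [lintegral_abs_rpow_Ioo_neg_self hγ (by positivity), ENNReal.ofReal_div_of_pos hL]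
    _ = ENNReal.ofReal (2 ^ (γ + 2) / (γ + 1) * (b - a) ^ γ) := by
        rw [Real.mul_rpow zero_le_two hL.le, Real.rpow_add_one hL.ne',
          Real.rpow_add_one two_ne_zero, Real.rpow_add two_pos γ 2, Real.rpow_two]
        field_simp

lemma rpow_le_two_rpow_abs_mul_rpow {γ m t : ℝ} (hm : 0 < m) (hmt : m ≤ t)
    (htm : t ≤ 2 * m) :
    t ^ γ ≤ 2 ^ |γ| * m ^ γ := by
  rcases le_or_gt 0 γ with hγ | hγ
  · calc t ^ γ ≤ (2 * m) ^ γ := Real.rpow_le_rpow (hm.le.trans hmt) htm hγ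
      _ = 2 ^ |γ| * m ^ γ := by rw [Real.mul_rpow zero_le_two hm.le, abs_of_nonneg hγ]
  · calc t ^ γ ≤ m ^ γ := Real.rpow_le_rpow_of_nonpos hm hmt hγ.le
      _ ≤ 2 ^ |γ| * m ^ γ :=
        le_mul_of_one_le_left (by positivity) (Real.one_le_rpow one_le_two (abs_nonneg γ))

lemma eAvgR_abs_rpow_Ioo_le_of_far {γ a b m : ℝ} (hab : a < b) (hm : 0 < m)
    (h : ∀ x ∈ Ioo a b, m ≤ |x| ∧ |x| ≤ 2 * m) :
    eAvgR (Ioo a b) (|·| ^ γ) ≤ ENNReal.ofReal (2 ^ |γ| * m ^ γ) :=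
  eAvgR_le_ofReal_of_forall_le hab fun x hx =>
    rpow_le_two_rpow_abs_mul_rpow hm (h x hx).1 (h x hx).2

lemma ENNReal.mul_rpow_le_ofReal_mul_rpow {A B : ℝ≥0∞} {u v q : ℝ}
    (hA : A ≤ ENNReal.ofReal u) (hB : B ≤ ENNReal.ofReal v) (hv : 0 ≤ v) (hq : 0 ≤ q) :
    A * B ^ q ≤ ENNReal.ofReal (u * v ^ q) := by
  rw [ENNReal.ofReal_mul' (Real.rpow_nonneg hv q), ← ENNReal.ofReal_rpow_of_nonneg hv hq]
  gcongr

lemma mul_rpow_mul_mul_rpow_rpow_cancel {m x y α β q : ℝ} (hm : 0 < m) (hy : 0 ≤ y)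
    (hαβ : α + β * q = 0) : x * m ^ α * (y * m ^ β) ^ q = x * y ^ q := by
  rw [Real.mul_rpow hy (Real.rpow_nonneg hm.le β), ← Real.rpow_mul hm.le]
  calc x * m ^ α * (y ^ q * m ^ (β * q)) = x * y ^ q * m ^ (α + β * q) := by
        rw [Real.rpow_add hm]; ring
    _ = x * y ^ q := by rw [hαβ, Real.rpow_zero, mul_one]

lemma two_rpow_mul_two_rpow_rpow {s t q r : ℝ} (h : s + t * q = 2 * r) :
    (2 : ℝ) ^ s * (2 ^ t) ^ q = 4 ^ r := by
  rw [← Real.rpow_mul zero_le_two, ← Real.rpow_add two_pos, h, Real.rpow_mul zero_le_two]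
  norm_num

section PowerWeight

variable {α β q a b : ℝ}

lemma eAvgR_abs_rpow_mul_rpow_le_of_near (hα : -1 < α) (hβ : -1 < β) (hq : 0 ≤ q)
    (hαβ : α + β * q = 0) (hab : a < b) (ha : a < 2 * b) (hb : 2 * a < b) :
    eAvgR (Ioo a b) (|·| ^ α) * eAvgR (Ioo a b) (|·| ^ β) ^ q ≤
      ENNReal.ofReal (4 ^ (q + 1) * (1 / (α + 1) * (1 / (β + 1)) ^ q)) := by
  have hβ1 : 0 < β + 1 := by linarith
  convert ENNReal.mul_rpow_le_ofReal_mul_rpow (eAvgR_abs_rpow_Ioo_le_of_near hα hab ha hb)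
    (eAvgR_abs_rpow_Ioo_le_of_near hβ hab ha hb) (by positivity) hq using 2
  rw [mul_rpow_mul_mul_rpow_rpow_cancel (sub_pos.2 hab) (by positivity) hαβ,
    ← two_rpow_mul_two_rpow_rpow (s := α + 2) (t := β + 2) (q := q) (by linarith),
    div_eq_mul_one_div (2 ^ (β + 2)), Real.mul_rpow (by positivity) (by positivity)]
  ring

lemma eAvgR_abs_rpow_mul_rpow_le_of_far {m : ℝ} (hq : 0 ≤ q) (hαβ : α + β * q = 0)
    (hab : a < b) (hm : 0 < m) (h : ∀ x ∈ Ioo a b, m ≤ |x| ∧ |x| ≤ 2 * m) :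
    eAvgR (Ioo a b) (|·| ^ α) * eAvgR (Ioo a b) (|·| ^ β) ^ q ≤
      ENNReal.ofReal (4 ^ |α|) := by
  have habs : |α| = |β| * q := by
    rw [eq_neg_of_add_eq_zero_left hαβ, abs_neg, abs_mul, abs_of_nonneg hq]
  convert ENNReal.mul_rpow_le_ofReal_mul_rpow (eAvgR_abs_rpow_Ioo_le_of_far hab hm h)
    (eAvgR_abs_rpow_Ioo_le_of_far hab hm h) (by positivity) hq using 2
  rw [mul_rpow_mul_mul_rpow_rpow_cancel hm (by positivity) hαβ,
    two_rpow_mul_two_rpow_rpow (r := |α|) (by linarith)]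

lemma eAvgR_abs_rpow_mul_rpow_le (hα : -1 < α) (hβ : -1 < β) (hq : 0 ≤ q)
    (hαβ : α + β * q = 0) (hab : a < b) :
    eAvgR (Ioo a b) (|·| ^ α) * eAvgR (Ioo a b) (|·| ^ β) ^ q ≤
      ENNReal.ofReal (max (4 ^ (q + 1) * (1 / (α + 1) * (1 / (β + 1)) ^ q)) (4 ^ |α|)) := by
  rcases le_or_gt (b - a) a with hright | hnear
  · refine (eAvgR_abs_rpow_mul_rpow_le_of_far hq hαβ hab (m := a) (by linarith)
      fun x hx => ?_).trans (ENNReal.ofReal_le_ofReal (le_max_right _ _))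
    rw [abs_of_pos (by linarith [hx.1])]
    constructor <;> linarith [hx.1, hx.2]
  rcases le_or_gt b (a - b) with hleft | hnear'
  · refine (eAvgR_abs_rpow_mul_rpow_le_of_far hq hαβ hab (m := -b) (by linarith)
      fun x hx => ?_).trans (ENNReal.ofReal_le_ofReal (le_max_right _ _))
    rw [abs_of_neg (by linarith [hx.2])]
    constructor <;> linarith [hx.1, hx.2]
  exact (eAvgR_abs_rpow_mul_rpow_le_of_near hα hβ hq hαβ hab (by linarith) (by linarith)).trans
    (ENNReal.ofReal_le_ofReal (le_max_left _ _))

end PowerWeight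

section Ap

variable {α β p : ℝ}

lemma ApR_abs_rpow_eq_iSup (hp : 1 < p) (hαβ : α + β * (p - 1) = 0) :
    ApR p (|·| ^ α) = ⨆ (a : ℝ) (b : ℝ) (_ : a < b),
      eAvgR (Ioo a b) (|·| ^ α) * eAvgR (Ioo a b) (|·| ^ β) ^ (p - 1) := by
  have hdual : (fun x : ℝ => (|x| ^ α) ^ (-1 / (p - 1))) = (|·| ^ β) := by
    funext x
    rw [← Real.rpow_mul (abs_nonneg x)]
    congr 1
    field_simp [(sub_pos.2 hp).ne']
    linarith
  simp only [ApR, hdual]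

lemma ApR_abs_rpow_le (hp : 1 < p) (hα : -1 < α) (hβ : -1 < β) (hαβ : α + β * (p - 1) = 0) :
    ApR p (|·| ^ α) ≤
      ENNReal.ofReal (max (4 ^ p * (1 / (α + 1) * (1 / (β + 1)) ^ (p - 1))) (4 ^ |α|)) := by
  rw [ApR_abs_rpow_eq_iSup hp hαβ]
  refine iSup_le fun a => iSup_le fun b => iSup_le fun hab => ?_
  simpa only [sub_add_cancel] using
    eAvgR_abs_rpow_mul_rpow_le hα hβ (sub_nonneg.2 hp.le) hαβ hab

lemma le_ApR_abs_rpow (hp : 1 < p) (hα : -1 < α) (hβ : -1 < β) (hαβ : α + β * (p - 1) = 0) :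
    ENNReal.ofReal (1 / (α + 1) * (1 / (β + 1)) ^ (p - 1)) ≤ ApR p (|·| ^ α) := by
  have hα1 : 0 < α + 1 := by linarith
  have hβ1 : 0 < β + 1 := by linarith
  rw [ApR_abs_rpow_eq_iSup hp hαβ]
  refine le_iSup₂_of_le 0 1 (le_iSup_of_le zero_lt_one (le_of_eq ?_))
  rw [eAvgR_abs_rpow_Ioo_zero_one hα, eAvgR_abs_rpow_Ioo_zero_one hβ,
    ENNReal.ofReal_rpow_of_nonneg (by positivity) (by linarith),
    ← ENNReal.ofReal_mul (by positivity)]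

end Ap

lemma half_rpow_add_one_le {α β q : ℝ} (hα : -1 < α) (hα1 : α ≤ 1) (hβ : -1 < β)
    (hβ1 : β ≤ 1) (hq : 0 ≤ q) :
    (1 / 2 : ℝ) ^ (q + 1) ≤ 1 / (α + 1) * (1 / (β + 1)) ^ q := by
  have hα0 : 0 < α + 1 := by linarith
  have hβ0 : 0 < β + 1 := by linarith
  rw [Real.rpow_add_one (by norm_num), mul_comm]
  gcongr <;> linarith

section Exponents

variable {p : ℝ}

lemma dual_exponent_mem_Ioc (hp : 6 / 5 < p) : (p - 2) / (4 * (p - 1)) ∈ Ioc (-1) 1 :=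
  ⟨by rw [lt_div_iff₀ (by linarith)]; linarith, by rw [div_le_one (by linarith)]; linarith⟩

lemma add_dual_exponent_mul_eq_zero (hp : 1 < p) :
    (2 - p) / 4 + (p - 2) / (4 * (p - 1)) * (p - 1) = 0 := by
  field_simp [(sub_pos.2 hp).ne']
  ring

lemma one_div_exponent_add_one_mul_rpow_eq (hp : 1 < p) :
    1 / ((2 - p) / 4 + 1) * (1 / ((p - 2) / (4 * (p - 1)) + 1)) ^ (p - 1) =
      4 * (1 / (6 - p) * (4 * (p - 1) / (5 * p - 6)) ^ (p - 1)) := by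
  rw [show (p - 2) / (4 * (p - 1)) + 1 = (5 * p - 6) / (4 * (p - 1)) by
    field_simp [(sub_pos.2 hp).ne']; ring, one_div_div]
  field_simp
  ring

lemma max_four_rpow_le (hp1 : 6 / 5 < p) (hp2 : p < 6) :
    max (4 ^ p * (1 / ((2 - p) / 4 + 1) * (1 / ((p - 2) / (4 * (p - 1)) + 1)) ^ (p - 1)))
        (4 ^ |(2 - p) / 4|) ≤
      4 ^ 7 * (1 / (6 - p) * (4 * (p - 1) / (5 * p - 6)) ^ (p - 1)) := by
  have hp : 1 < p := by linarith
  obtain ⟨hβ, hβ1⟩ := dual_exponent_mem_Ioc hp1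
  have hK : (1 / 2 : ℝ) ^ (6 : ℝ) ≤
      4 * (1 / (6 - p) * (4 * (p - 1) / (5 * p - 6)) ^ (p - 1)) := by
    rw [← one_div_exponent_add_one_mul_rpow_eq hp]
    refine (Real.rpow_le_rpow_of_exponent_ge (by norm_num) (by norm_num) hp2.le).trans ?_
    simpa only [sub_add_cancel] using
      half_rpow_add_one_le (by linarith) (by linarith) hβ hβ1 (sub_nonneg.2 hp.le)
  have h4p : (4 : ℝ) ^ p ≤ 4 ^ (6 : ℝ) :=
    Real.rpow_le_rpow_of_exponent_le (by norm_num) hp2.le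
  have h4α : (4 : ℝ) ^ |(2 - p) / 4| ≤ 4 ^ (1 : ℝ) :=
    Real.rpow_le_rpow_of_exponent_le (by norm_num) (abs_le.2 ⟨by linarith, by linarith⟩)
  rw [one_div_exponent_add_one_mul_rpow_eq hp]
  norm_num at hK h4p h4α ⊢
  constructor <;> nlinarith

end Exponents

/-- For `6/5 < p < 6`, the weight `w(x) = |x|^{(2-p)/4}` on `ℝ` belongs
to `A_p(ℝ)`, with `[w]_{A_p(ℝ)} ≈ (1/(6-p))·(4(p-1)/(5p-6))^{p-1}`, the implicit constants
being independent of `p`. -/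
theorem power_weight_Ap_characteristic :
    ∃ c C : ℝ, 0 < c ∧ 0 < C ∧
      ∀ p : ℝ, 6 / 5 < p → p < 6 →
        ApR p (fun x => |x| ^ ((2 - p) / 4)) < ⊤ ∧
        ENNReal.ofReal (c * (1 / (6 - p) * (4 * (p - 1) / (5 * p - 6)) ^ (p - 1))) ≤
          ApR p (fun x => |x| ^ ((2 - p) / 4)) ∧
        ApR p (fun x => |x| ^ ((2 - p) / 4)) ≤
          ENNReal.ofReal (C * (1 / (6 - p) * (4 * (p - 1) / (5 * p - 6)) ^ (p - 1))) := by
  refine ⟨4, 4 ^ 7, by norm_num, by norm_num, fun p hp1 hp2 => ?_⟩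
  have hp : 1 < p := by linarith
  have hα : -1 < (2 - p) / 4 := by linarith
  have hβ := (dual_exponent_mem_Ioc hp1).1
  have hαβ := add_dual_exponent_mul_eq_zero hp
  have hupper : ApR p (fun x => |x| ^ ((2 - p) / 4)) ≤
      ENNReal.ofReal (4 ^ 7 * (1 / (6 - p) * (4 * (p - 1) / (5 * p - 6)) ^ (p - 1))) :=
    (ApR_abs_rpow_le hp hα hβ hαβ).trans (ENNReal.ofReal_le_ofReal (max_four_rpow_le hp1 hp2))
  refine ⟨hupper.trans_lt ENNReal.ofReal_lt_top, ?_, hupper⟩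
  simpa only [one_div_exponent_add_one_mul_rpow_eq hp] using le_ApR_abs_rpow hp hα hβ hαβ
end
end

section
/- Suppose 0 < r < 2/5. If I₁ = I₁(p₁, r) is an arc of radius r centered at a point p₁ ∈ ∂𝔻, then there exists a point p₂ ∈ ∂𝔻 and an arc I₂ = I₂(p₂, r) of radius r centered at p₂, disjoint from I₁, such that for j ∈ {1,2}, any function f > 0 supported in I_j, and any z ∈ I_k with k ≠ j, one has |S₀f(z)| ≥ (1/(28π)) ⨍_{I_j} f d θ̃. -/
noncomputable section

open MeasureTheory Filter Set
open scoped ENNReal ComplexConjugate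

/-- The argument of `z` normalized to lie in `[0, 2π)`. -/
def circArg (z : ℂ) : ℝ :=
  if 0 ≤ Complex.arg z then Complex.arg z else Complex.arg z + 2 * Real.pi

/-- The arc length "metric" `d(e^{iθ}, e^{iφ}) = |θ - φ|`, `θ, φ ∈ [0, 2π)`. -/
def arcDist (z w : ℂ) : ℝ := |circArg z - circArg w|

/-- The arc `I(ζ, r) = {ξ ∈ ∂𝔻 : d(ξ, ζ) < r}` centered at `ζ ∈ ∂𝔻` of radius `r`. -/
def arcBall (ζ : ℂ) (r : ℝ) : Set ℂ :=
  {ξ ∈ Metric.sphere (0 : ℂ) 1 | arcDist ξ ζ < r}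

/-- The Szegő projection evaluated by its kernel: for `f` supported away from `z`,
`S₀ f (z) = ∫ f(w)/(1 - w̄ z) d θ̃(w)`. -/
def szegoKernelInt (f : ℂ → ℝ) (z : ℂ) : ℂ :=
  ∫ w, (f w : ℂ) / (1 - conj w * z) ∂circleMeasure

/-! Take `p₂` at angular distance `3r` from `p₁`. For `w ∈ I(p₁, r)` and `z ∈ I(p₂, r)` the
phase `ψ` of `w̄ z` satisfies `r < ±ψ < 5r`, with a sign that does not depend on `w` and `z`, and
`Im (1 - e^{iψ})⁻¹ = cot(ψ/2)/2` has that sign and absolute value at least `1/(2|ψ|) > 1/(10r)`.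
Hence `|S₀f(z)| ≥ |Im S₀f(z)| ≥ (10r)⁻¹ ∫ f`. Since `|I(p₁, r)| ≥ r/(2π)`, the average of `f` over
the arc is at most `(2π/r) ∫ f`, and `(1/(28π)) (2π/r) = (14r)⁻¹ ≤ (10r)⁻¹`. -/

open Complex

lemma circArg_eq_toIcoMod (z : ℂ) : circArg z = toIcoMod Real.two_pi_pos 0 (arg z) := by
  have := neg_pi_lt_arg z
  have := arg_le_pi z
  unfold circArg
  split_ifs with h
  · exact ((toIcoMod_eq_self _).2 ⟨h, by linarith⟩).symm
  · rw [← toIcoMod_add_right, (toIcoMod_eq_self _).2 ⟨by linarith, by linarith⟩]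

lemma circArg_mem_Ico (z : ℂ) : circArg z ∈ Ico 0 (2 * Real.pi) := by
  rw [circArg_eq_toIcoMod]
  exact toIcoMod_mem_Ico' _ _

lemma circArg_exp_mul_I {θ : ℝ} (hθ : θ ∈ Ico 0 (2 * Real.pi)) :
    circArg (exp (θ * I)) = θ := by
  rw [circArg_eq_toIcoMod, arg_exp_mul_I, toIcoMod_toIocMod,
    (toIcoMod_eq_self _).2 (by simpa using hθ)]

lemma exp_circArg_mul_I {z : ℂ} (hz : z ∈ Metric.sphere (0 : ℂ) 1) :
    exp (circArg z * I) = z := by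
  have hz' : exp (arg z * I) = z := by
    simpa [show ‖z‖ = 1 by simpa using hz] using norm_mul_exp_arg_mul_I z
  unfold circArg
  split_ifs
  · exact hz'
  · rw [ofReal_add, add_mul, exp_add, hz']
    simp

lemma measurable_circArg : Measurable circArg := by
  unfold circArg
  exact Measurable.ite (measurableSet_le measurable_const measurable_arg)
    measurable_arg (measurable_arg.add_const _)

lemma measurableSet_arcBall (ζ : ℂ) (r : ℝ) : MeasurableSet (arcBall ζ r) :=
  Metric.isClosed_sphere.measurableSet.inter <|
    measurableSet_lt ((measurable_circArg.sub_const _).abs) measurable_const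

lemma conj_mul_eq_exp_circArg_sub {w z : ℂ} (hw : w ∈ Metric.sphere (0 : ℂ) 1)
    (hz : z ∈ Metric.sphere (0 : ℂ) 1) :
    conj w * z = exp (↑(circArg z - circArg w) * I) := by
  conv_lhs => rw [← exp_circArg_mul_I hw, ← exp_circArg_mul_I hz]
  rw [← exp_conj, ← exp_add]
  congr 1
  simp only [map_mul, conj_ofReal, conj_I, ofReal_sub]
  ring

lemma circleMeasure_apply {S : Set ℂ} (hS : MeasurableSet S) :
    circleMeasure S =
      ENNReal.ofReal (2 * Real.pi)⁻¹ * volume (circleMap 0 1 ⁻¹' S ∩ Ioc 0 (2 * Real.pi)) := by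
  have hmeas := (continuous_circleMap 0 1).measurable
  rw [circleMeasure, Measure.smul_apply, Measure.map_apply hmeas hS,
    Measure.restrict_apply (hmeas hS), smul_eq_mul]

instance : IsProbabilityMeasure circleMeasure := by
  constructor
  rw [circleMeasure_apply MeasurableSet.univ, preimage_univ, univ_inter, Real.volume_Ioc,
    ← ENNReal.ofReal_mul (by positivity), sub_zero, inv_mul_cancel₀ (by positivity),
    ENNReal.ofReal_one]

lemma ofReal_div_le_circleMeasure_arcBall (ζ : ℂ) {r : ℝ} (hr0 : 0 ≤ r)
    (hr : r ≤ 2 * Real.pi) :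
    ENNReal.ofReal (r / (2 * Real.pi)) ≤ circleMeasure (arcBall ζ r) := by
  obtain ⟨hθ₀, hθ₀'⟩ := circArg_mem_Ico ζ
  -- `arcDist` does not wrap around at angle `0`, so only the part of the arc inside `(0, 2π)`
  -- is counted.
  have hJ : Ioo (circArg ζ - r) (circArg ζ + r) ∩ Ioo 0 (2 * Real.pi) ⊆
      circleMap 0 1 ⁻¹' arcBall ζ r ∩ Ioc 0 (2 * Real.pi) := by
    rintro θ ⟨⟨h₁, h₂⟩, h₃, h₄⟩
    have hθ : circleMap 0 1 θ = exp (θ * I) := by simp [circleMap]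
    refine ⟨?_, h₃, h₄.le⟩
    rw [mem_preimage, hθ, arcBall, mem_ofPred_eq, arcDist, circArg_exp_mul_I ⟨h₃.le, h₄⟩, abs_lt]
    exact ⟨by simp [norm_exp_ofReal_mul_I], by linarith, by linarith⟩
  have hvolJ : ENNReal.ofReal r ≤
      volume (Ioo (circArg ζ - r) (circArg ζ + r) ∩ Ioo 0 (2 * Real.pi)) := by
    rw [Ioo_inter_Ioo, Real.volume_Ioo]
    apply ENNReal.ofReal_le_ofReal
    rcases le_total (circArg ζ - r) 0 with h | h <;>
    rcases le_total (circArg ζ + r) (2 * Real.pi) with h' | h' <;>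
    simp only [max_eq_left, max_eq_right, min_eq_left, min_eq_right, h, h'] <;> linarith
  rw [circleMeasure_apply (measurableSet_arcBall ζ r), div_eq_inv_mul,
    ENNReal.ofReal_mul (by positivity)]
  gcongr
  exact hvolJ.trans (measure_mono hJ)

lemma Real.inv_two_mul_le_cot {x : ℝ} (hx0 : 0 < x) (hx1 : x ≤ 1) : (2 * x)⁻¹ ≤ Real.cot x := by
  have hsin : 0 < Real.sin x := Real.sin_pos_of_pos_of_lt_pi hx0 (by linarith [Real.pi_gt_three])
  have hcos : 1 / 2 ≤ Real.cos x := by nlinarith [Real.one_sub_sq_div_two_le_cos (x := x)]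
  rw [Real.cot_eq_cos_div_sin, le_div_iff₀ hsin, inv_mul_eq_div, div_le_iff₀ (by positivity)]
  nlinarith [Real.sin_le hx0.le]

lemma im_inv_one_sub_exp_mul_I (ψ : ℝ) :
    ((1 - exp (ψ * I))⁻¹).im = Real.cot (ψ / 2) / 2 := by
  obtain ⟨x, rfl⟩ : ∃ x, ψ = 2 * x := ⟨ψ / 2, by ring⟩
  have hnormSq : normSq (1 - exp (↑(2 * x) * I)) = 4 * Real.sin x ^ 2 := by
    rw [normSq_apply]
    simp only [sub_re, sub_im, one_re, one_im, exp_ofReal_mul_I_re, exp_ofReal_mul_I_im,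
      Real.cos_two_mul, Real.sin_two_mul]
    nlinarith [Real.sin_sq_add_cos_sq x]
  rw [inv_im, hnormSq, mul_div_cancel_left₀ x two_ne_zero, Real.cot_eq_cos_div_sin]
  simp only [sub_im, one_im, exp_ofReal_mul_I_im, Real.sin_two_mul]
  rcases eq_or_ne (Real.sin x) 0 with h | h
  · simp [h]
  · field_simp
    ring

lemma sign_mul_im_inv_one_sub_exp_mul_I {ε : ℝ} (hε : ε = 1 ∨ ε = -1) (ψ : ℝ) :
    ε * ((1 - exp (ψ * I))⁻¹).im = ((1 - exp (↑(ε * ψ) * I))⁻¹).im := by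
  rcases hε with rfl | rfl
  · simp
  · simp only [im_inv_one_sub_exp_mul_I, Real.cot_eq_cos_div_sin, neg_mul, one_mul, neg_div,
      Real.cos_neg, Real.sin_neg, div_neg]

lemma inv_two_mul_le_im_inv_one_sub_exp_mul_I {ψ : ℝ} (hψ0 : 0 < ψ) (hψ2 : ψ ≤ 2) :
    (2 * ψ)⁻¹ ≤ ((1 - exp (ψ * I))⁻¹).im := by
  rw [im_inv_one_sub_exp_mul_I]
  have := Real.inv_two_mul_le_cot (x := ψ / 2) (by positivity) (by linarith)
  rw [mul_div_cancel₀ ψ two_ne_zero] at this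
  rw [mul_inv, ← div_eq_inv_mul]
  linarith

lemma norm_inv_one_sub_exp_mul_I_le {ψ : ℝ} (hψ0 : ψ ≠ 0) (hψ : |ψ| ≤ Real.pi) :
    ‖(1 - exp (ψ * I))⁻¹‖ ≤ Real.pi / (2 * |ψ|) := by
  have hjordan : 2 * |ψ| / Real.pi ≤ 2 * |Real.sin (ψ / 2)| :=
    calc 2 * |ψ| / Real.pi = 2 * (2 / Real.pi * |ψ / 2|) := by rw [abs_div, abs_two]; ring
      _ ≤ 2 * |Real.sin (ψ / 2)| := by
        gcongr
        exact Real.mul_abs_le_abs_sin (by rw [abs_div, abs_two]; linarith)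
  have hnorm : ‖1 - exp (ψ * I)‖ = 2 * |Real.sin (ψ / 2)| := by
    rw [norm_sub_rev, mul_comm, norm_exp_I_mul_ofReal_sub_one, norm_mul, Real.norm_eq_abs,
      Real.norm_eq_abs, abs_two]
  rw [norm_inv, hnorm, ← inv_div (2 * |ψ|)]
  exact inv_anti₀ (by positivity) hjordan

lemma le_norm_integral_of_le_mul_im {α : Type*} [MeasurableSpace α] {μ : Measure α}
    {g : α → ℝ} {F : α → ℂ} {ε : ℝ} (hε : |ε| ≤ 1) (hg : Integrable g μ)
    (hF : Integrable F μ) (h : ∀ᵐ x ∂μ, g x ≤ ε * (F x).im) :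
    ∫ x, g x ∂μ ≤ ‖∫ x, F x ∂μ‖ :=
  calc ∫ x, g x ∂μ ≤ ∫ x, ε * (F x).im ∂μ := integral_mono_ae hg (hF.im.const_mul ε) h
    _ = ε * (∫ x, F x ∂μ).im := by rw [integral_const_mul]; exact congrArg _ (integral_im hF)
    _ ≤ |ε| * |(∫ x, F x ∂μ).im| := by rw [← abs_mul]; exact le_abs_self _
    _ ≤ 1 * ‖∫ x, F x ∂μ‖ := mul_le_mul hε (abs_im_le_norm _) (abs_nonneg _) zero_le_one
    _ = ‖∫ x, F x ∂μ‖ := one_mul _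

lemma sign_mul_sub_circArg_mem_Ioo {p q w z : ℂ} {r ε : ℝ} (hε : ε = 1 ∨ ε = -1)
    (hpq : circArg q - circArg p = ε * (3 * r)) (hw : w ∈ arcBall p r)
    (hz : z ∈ arcBall q r) :
    ε * (circArg z - circArg w) ∈ Ioo r (5 * r) := by
  have hw' := abs_lt.1 hw.2
  have hz' := abs_lt.1 hz.2
  rcases hε with rfl | rfl <;> constructor <;> linarith [hw'.1, hw'.2, hz'.1, hz'.2]

lemma szegoKernel_bounds_of_mem_arcBall {p q w z : ℂ} {r ε : ℝ} (hε : ε = 1 ∨ ε = -1)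
    (hr : 5 * r ≤ 2) (hpq : circArg q - circArg p = ε * (3 * r)) (hw : w ∈ arcBall p r)
    (hz : z ∈ arcBall q r) :
    (10 * r)⁻¹ ≤ ε * ((1 - conj w * z)⁻¹).im ∧ ‖(1 - conj w * z)⁻¹‖ ≤ Real.pi / (2 * r) := by
  obtain ⟨hψ₁, hψ₂⟩ := sign_mul_sub_circArg_mem_Ioo hε hpq hw hz
  set ψ := circArg z - circArg w
  have hr0 : 0 < r := by linarith
  have habs : |ψ| = ε * ψ := by
    rw [← abs_of_pos (hr0.trans hψ₁), abs_mul, show |ε| = 1 by rcases hε with rfl | rfl <;> simp,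
      one_mul]
  rw [conj_mul_eq_exp_circArg_sub hw.1 hz.1]
  refine ⟨?_, ?_⟩
  · rw [sign_mul_im_inv_one_sub_exp_mul_I hε]
    calc (10 * r)⁻¹ ≤ (2 * (ε * ψ))⁻¹ := inv_anti₀ (by linarith) (by linarith)
      _ ≤ _ := inv_two_mul_le_im_inv_one_sub_exp_mul_I (by linarith) (by linarith)
  · calc ‖(1 - exp (ψ * I))⁻¹‖ ≤ Real.pi / (2 * |ψ|) :=
          norm_inv_one_sub_exp_mul_I_le (abs_pos.1 (by linarith)) (by linarith [Real.pi_gt_three])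
      _ ≤ Real.pi / (2 * r) := by gcongr; linarith

lemma inv_ten_mul_integral_le_norm_szegoKernelInt {p q : ℂ} {r : ℝ} (hr0 : 0 < r)
    (hr : 5 * r ≤ 2) (hpq : |circArg q - circArg p| = 3 * r) {f : ℂ → ℝ}
    (hf : Integrable f circleMeasure) (hf0 : ∀ x, 0 ≤ f x)
    (hsupp : Function.support f ⊆ arcBall p r) {z : ℂ} (hz : z ∈ arcBall q r) :
    (10 * r)⁻¹ * ∫ w, f w ∂circleMeasure ≤ ‖szegoKernelInt f z‖ := by
  obtain ⟨ε, hε, hpq⟩ : ∃ ε : ℝ, (ε = 1 ∨ ε = -1) ∧ circArg q - circArg p = ε * (3 * r) := by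
    rcases (abs_eq (by positivity)).1 hpq with h | h
    · exact ⟨1, .inl rfl, by rw [h, one_mul]⟩
    · exact ⟨-1, .inr rfl, by rw [h, neg_one_mul]⟩
  have hker (w : ℂ) (hw : f w ≠ 0) := szegoKernel_bounds_of_mem_arcBall hε hr hpq (hsupp hw) hz
  set k : ℂ → ℂ := fun w => (1 - conj w * z)⁻¹
  have hk : Measurable k := by fun_prop
  have hF : Integrable (fun w => (f w : ℂ) * k w) circleMeasure := by
    refine Integrable.mono' (hf.const_mul (Real.pi / (2 * r)))
      ((hf.ofReal).aestronglyMeasurable.mul hk.aestronglyMeasurable) (ae_of_all _ fun w => ?_)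
    rcases eq_or_ne (f w) 0 with h | h
    · simp [h]
    · rw [norm_mul, norm_real, Real.norm_of_nonneg (hf0 w), mul_comm]
      exact mul_le_mul_of_nonneg_right (hker w h).2 (hf0 w)
  rw [← integral_const_mul, szegoKernelInt]
  simp_rw [div_eq_mul_inv]
  refine le_norm_integral_of_le_mul_im (ε := ε) (by rcases hε with rfl | rfl <;> simp)
    (hf.const_mul _) hF (ae_of_all _ fun w => ?_)
  rcases eq_or_ne (f w) 0 with h | h
  · simp [h]
  · rw [im_ofReal_mul, mul_left_comm, mul_comm _ (f w)]
    exact mul_le_mul_of_nonneg_left (hker w h).1 (hf0 w)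

lemma average_arcBall_le {f : ℂ → ℝ} (hf : Integrable f circleMeasure) (hf0 : ∀ x, 0 ≤ f x)
    (ζ : ℂ) {r : ℝ} (hr0 : 0 < r) (hr : r ≤ 2 * Real.pi) :
    (circleMeasure (arcBall ζ r)).toReal⁻¹ * ∫ w in arcBall ζ r, f w ∂circleMeasure ≤
      2 * Real.pi / r * ∫ w, f w ∂circleMeasure := by
  have hμ : r / (2 * Real.pi) ≤ (circleMeasure (arcBall ζ r)).toReal :=
    (ENNReal.ofReal_le_iff_le_toReal (measure_ne_top _ _)).1
      (ofReal_div_le_circleMeasure_arcBall ζ hr0.le hr)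
  refine mul_le_mul ?_ (setIntegral_le_integral hf (ae_of_all _ hf0))
    (setIntegral_nonneg (measurableSet_arcBall ζ r) fun x _ => hf0 x) (by positivity)
  rw [← inv_div]
  exact inv_anti₀ (by positivity) hμ

lemma exists_abs_circArg_sub_eq (p : ℂ) {d : ℝ} (hd0 : 0 ≤ d) (hd : d ≤ Real.pi) :
    ∃ q ∈ Metric.sphere (0 : ℂ) 1, |circArg q - circArg p| = d := by
  obtain ⟨hp₀, hp₀'⟩ := circArg_mem_Ico p
  obtain ⟨θ, hθ, hθp⟩ : ∃ θ ∈ Ico 0 (2 * Real.pi), |θ - circArg p| = d := by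
    rcases lt_or_ge (circArg p + d) (2 * Real.pi) with h | h
    · exact ⟨circArg p + d, ⟨by linarith, h⟩, by simp [abs_of_nonneg hd0]⟩
    · exact ⟨circArg p - d, ⟨by linarith, by linarith⟩, by simp [abs_of_nonneg hd0]⟩
  exact ⟨exp (θ * I), by simp [norm_exp_ofReal_mul_I], by rw [circArg_exp_mul_I hθ, hθp]⟩

lemma disjoint_arcBall_of_two_mul_le {p q : ℂ} {r : ℝ} (h : 2 * r ≤ |circArg q - circArg p|) :
    Disjoint (arcBall p r) (arcBall q r) := by
  refine Set.disjoint_left.2 fun ξ hp hq => ?_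
  have key : |circArg q - circArg p| ≤ arcDist ξ p + arcDist ξ q := by
    simpa only [arcDist, sub_sub_sub_cancel_left] using
      abs_sub (circArg ξ - circArg p) (circArg ξ - circArg q)
  linarith [hp.2, hq.2]

lemma one_div_mul_average_le_norm_szegoKernelInt {p q : ℂ} {r : ℝ} (hr0 : 0 < r)
    (hr : 5 * r ≤ 2) (hpq : |circArg q - circArg p| = 3 * r) {f : ℂ → ℝ}
    (hf : Integrable f circleMeasure) (hf0 : ∀ x, 0 ≤ f x)
    (hsupp : Function.support f ⊆ arcBall p r) {z : ℂ} (hz : z ∈ arcBall q r) :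
    1 / (28 * Real.pi) *
        ((circleMeasure (arcBall p r)).toReal⁻¹ * ∫ w in arcBall p r, f w ∂circleMeasure) ≤
      ‖szegoKernelInt f z‖ :=
  have hI : 0 ≤ ∫ w, f w ∂circleMeasure := integral_nonneg hf0
  calc _ ≤ 1 / (28 * Real.pi) * (2 * Real.pi / r * ∫ w, f w ∂circleMeasure) :=
        mul_le_mul_of_nonneg_left
          (average_arcBall_le hf hf0 p hr0 (by linarith [Real.pi_gt_three])) (by positivity)
    _ = (14 * r)⁻¹ * ∫ w, f w ∂circleMeasure := by field_simp; ring
    _ ≤ (10 * r)⁻¹ * ∫ w, f w ∂circleMeasure := by gcongr; norm_num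
    _ ≤ ‖szegoKernelInt f z‖ :=
        inv_ten_mul_integral_le_norm_szegoKernelInt hr0 hr hpq hf hf0 hsupp hz

theorem szego_ball_separation_general
    (r : ℝ) (hr0 : 0 < r) (hr : r < 2 / 5)
    (p₁ : ℂ) :
    ∃ p₂ ∈ Metric.sphere (0 : ℂ) 1,
      Disjoint (arcBall p₁ r) (arcBall p₂ r) ∧
      (∀ f : ℂ → ℝ, Integrable f circleMeasure → (∀ x, 0 ≤ f x) →
        Function.support f ⊆ arcBall p₁ r →
        ∀ z ∈ arcBall p₂ r,
          1 / (28 * Real.pi) *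
              ((circleMeasure (arcBall p₁ r)).toReal⁻¹ *
                ∫ w in arcBall p₁ r, f w ∂circleMeasure) ≤
            ‖szegoKernelInt f z‖) ∧
      (∀ f : ℂ → ℝ, Integrable f circleMeasure → (∀ x, 0 ≤ f x) →
        Function.support f ⊆ arcBall p₂ r →
        ∀ z ∈ arcBall p₁ r,
          1 / (28 * Real.pi) *
              ((circleMeasure (arcBall p₂ r)).toReal⁻¹ *
                ∫ w in arcBall p₂ r, f w ∂circleMeasure) ≤
            ‖szegoKernelInt f z‖) := by
  obtain ⟨p₂, hp₂, hd⟩ :=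
    exists_abs_circArg_sub_eq p₁ (by positivity : 0 ≤ 3 * r) (by linarith [Real.pi_gt_three])
  have hr5 : 5 * r ≤ 2 := by linarith
  refine ⟨p₂, hp₂, disjoint_arcBall_of_two_mul_le (by linarith), fun f hf hf0 hsupp z hz => ?_,
    fun f hf hf0 hsupp z hz => ?_⟩
  · exact one_div_mul_average_le_norm_szegoKernelInt hr0 hr5 hd hf hf0 hsupp hz
  · exact one_div_mul_average_le_norm_szegoKernelInt hr0 hr5 (by rwa [abs_sub_comm]) hf hf0
      hsupp hz

/-- Suppose `0 < r < 2/5`. If `I₁ = I(p₁, r)` is an arc centered at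
`p₁ ∈ ∂𝔻`, then there is a point `p₂ ∈ ∂𝔻` and a disjoint arc `I₂ = I(p₂, r)` so that for
`j ∈ {1,2}`, any `f > 0` supported in `I_j` and any `z ∈ I_k` with `k ≠ j`,
`|S₀ f (z)| ≥ (1/(28π)) ⨍_{I_j} f d θ̃`. -/
theorem szego_ball_separation
    (r : ℝ) (hr0 : 0 < r) (hr : r < 2 / 5)
    (p₁ : ℂ) (hp₁ : p₁ ∈ Metric.sphere (0 : ℂ) 1) :
    ∃ p₂ ∈ Metric.sphere (0 : ℂ) 1,
      Disjoint (arcBall p₁ r) (arcBall p₂ r) ∧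
      (∀ f : ℂ → ℝ, Integrable f circleMeasure → (∀ x, 0 ≤ f x) →
        Function.support f ⊆ arcBall p₁ r →
        ∀ z ∈ arcBall p₂ r,
          1 / (28 * Real.pi) *
              ((circleMeasure (arcBall p₁ r)).toReal⁻¹ *
                ∫ w in arcBall p₁ r, f w ∂circleMeasure) ≤
            ‖szegoKernelInt f z‖) ∧
      (∀ f : ℂ → ℝ, Integrable f circleMeasure → (∀ x, 0 ≤ f x) →
        Function.support f ⊆ arcBall p₂ r →
        ∀ z ∈ arcBall p₁ r,
          1 / (28 * Real.pi) *
              ((circleMeasure (arcBall p₂ r)).toReal⁻¹ *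
                ∫ w in arcBall p₂ r, f w ∂circleMeasure) ≤
            ‖szegoKernelInt f z‖) :=
  szego_ball_separation_general r hr0 hr p₁
end
end
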